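/- Let κ > 0 and 0 ≤ v < 1. Then for every real u > 2, u·μ^{(κ)}(u,v) = κ·∫_{u−1}^{u} μ^{(κ)}(s,v) ds. -/

import Mathlib

/-!
Slicing `V_{k+1}(u,v)` along its first coordinate `x` leaves `x ∈ (0,1)` and `V_k(u-x,v)`, and
the integrand factors as `f_k(u; x, t) = (u-x)⁻¹ f_{k-1}(u-x; t)`. By Fubini,
`u μ_{k+1}(u,v) = ∫_0^1 μ_k(u-x,v) dx = ∫_{u-1}^u μ_k(s,v) ds` as soon as `u ≥ 2`, and then
also `μ_1(u,v) = 0`; multiplying by `κ^{k+1}` and summing over `k` gives the equation. Sum and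
integral commute by dominated convergence: for `v ≥ 0`, `V_k(s,v)` lies in the simplex
`{t > 0, ∑ t < s}` of volume `s^k/k!` and the integrand is at most `1`, so `|μ_k(s,v)| ≤ u^k/k!`
for `s ∈ (u-1,u]`.
-/

open MeasureTheory

/-- The region `V_k(u,v)`. -/
def Vk (k : ℕ) (u v : ℝ) : Set (Fin k → ℝ) :=
  {t | (∀ i, t i ∈ Set.Ioo (0:ℝ) 1) ∧
    (∑ i ∈ Finset.univ.filter (fun i : Fin k => (i : ℕ) < k - 1), t i) < u - 1 ∧
    u - 1 < ∑ i, t i ∧ ∑ i, t i < u - v}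

/-- The function `μ_k(u,v)`. -/
noncomputable def muk (k : ℕ) (u v : ℝ) : ℝ :=
  if k = 1 then
    u⁻¹ * (volume (Set.Ioo (0:ℝ) 1 ∩ Set.Ioo (u-1) (u-v))).toReal
  else
    u⁻¹ * ∫ t in Vk k u v,
      ∏ j ∈ Finset.univ.filter (fun j : Fin k => (j : ℕ) < k - 1),
        (u - ∑ i ∈ Finset.univ.filter (fun i : Fin k => i ≤ j), t i)⁻¹

/-- `μ^{(κ)}(u,v) = ∑_{k ≥ 1} κ^k μ_k(u,v)`. -/
noncomputable def mukappa (κ u v : ℝ) : ℝ := ∑' k : ℕ, κ ^ (k+1) * muk (k+1) u v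

open Finset

section FinCons

variable {α : Type*} [MeasureSpace α] {k : ℕ}

theorem coe_piFinSuccAbove_symm_zero :
    ⇑(MeasurableEquiv.piFinSuccAbove (fun _ : Fin (k + 1) => α) 0).symm =
      fun p => Fin.cons p.1 p.2 := by
  ext p : 1
  simp [MeasurableEquiv.piFinSuccAbove_symm_apply, Fin.insertNthEquiv, Fin.insertNth_zero']

theorem measurableEmbedding_finCons :
    MeasurableEmbedding (fun p : α × (Fin k → α) => (Fin.cons p.1 p.2 : Fin (k + 1) → α)) :=
  coe_piFinSuccAbove_symm_zero (α := α) ▸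
    (MeasurableEquiv.piFinSuccAbove (fun _ : Fin (k + 1) => α) 0).symm.measurableEmbedding

theorem measurableSet_setOf_finCons_mem {S : Set (Fin (k + 1) → α)} (hS : MeasurableSet S)
    (x : α) : MeasurableSet {t : Fin k → α | Fin.cons x t ∈ S} :=
  measurable_prodMk_left (measurableEmbedding_finCons.measurable hS)

variable [SigmaFinite (volume : Measure α)]

theorem measurePreserving_finCons :
    MeasurePreserving (fun p : α × (Fin k → α) => (Fin.cons p.1 p.2 : Fin (k + 1) → α)) :=
  coe_piFinSuccAbove_symm_zero (α := α) ▸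
    (volume_preserving_piFinSuccAbove (fun _ : Fin (k + 1) => α) 0).symm

theorem volume_eq_lintegral_volume_finCons {S : Set (Fin (k + 1) → α)} (hS : MeasurableSet S) :
    volume S = ∫⁻ x, volume {t : Fin k → α | Fin.cons x t ∈ S} := by
  rw [← measurePreserving_finCons.measure_preimage hS.nullMeasurableSet, Measure.volume_eq_prod,
    Measure.prod_apply (measurableEmbedding_finCons.measurable hS)]
  rfl

theorem setIntegral_eq_integral_setIntegral_finCons {S : Set (Fin (k + 1) → α)}
    (hS : MeasurableSet S) {f : (Fin (k + 1) → α) → ℝ} (hf : IntegrableOn f S) :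
    ∫ t in S, f t =
      ∫ x, ∫ t in {t : Fin k → α | Fin.cons x t ∈ S}, f (Fin.cons x t) := by
  have hcomp : Integrable (fun p : α × (Fin k → α) => S.indicator f (Fin.cons p.1 p.2))
      (volume.prod volume) :=
    (measurePreserving_finCons.integrable_comp_emb measurableEmbedding_finCons).2
      ((integrable_indicator_iff hS).2 hf)
  rw [← integral_indicator hS, ← measurePreserving_finCons.integral_comp
    measurableEmbedding_finCons, Measure.volume_eq_prod, integral_prod _ hcomp]
  refine integral_congr_ae (ae_of_all _ fun x => ?_)
  dsimp only
  rw [← integral_indicator (measurableSet_setOf_finCons_mem hS x)]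
  rfl

end FinCons

section Simplex

def openSimplex (k : ℕ) (s : ℝ) : Set (Fin k → ℝ) :=
  {t | (∀ i, 0 < t i) ∧ ∑ i, t i < s}

theorem measurableSet_openSimplex (k : ℕ) (s : ℝ) : MeasurableSet (openSimplex k s) :=
  measurableSet_setOfPred.2 (by fun_prop)

theorem openSimplex_eq_empty {k : ℕ} {s : ℝ} (hs : s ≤ 0) : openSimplex k s = ∅ :=
  Set.eq_empty_of_forall_notMem fun _ ht =>
    (ht.2.trans_le hs).not_ge (sum_nonneg fun i _ => (ht.1 i).le)

theorem finCons_mem_openSimplex {k : ℕ} {s x : ℝ} {t : Fin k → ℝ} :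
    (Fin.cons x t : Fin (k + 1) → ℝ) ∈ openSimplex (k + 1) s ↔
      0 < x ∧ t ∈ openSimplex k (s - x) := by
  simp only [openSimplex, Set.mem_ofPred_eq, Fin.forall_fin_succ, Fin.cons_zero, Fin.cons_succ,
    Fin.sum_cons]
  constructor
  · rintro ⟨⟨hx, ht⟩, hs⟩
    exact ⟨hx, ht, by linarith⟩
  · rintro ⟨hx, ht, hs⟩
    exact ⟨⟨hx, ht⟩, by linarith⟩

theorem integral_sub_pow_div_factorial (k : ℕ) (s : ℝ) :
    ∫ x in (0 : ℝ)..s, (s - x) ^ k / k.factorial = s ^ (k + 1) / (k + 1).factorial := by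
  rw [intervalIntegral.integral_div, intervalIntegral.integral_comp_sub_left (fun y => y ^ k),
    sub_self, sub_zero, integral_pow, Nat.factorial_succ]
  push_cast
  field_simp
  ring

theorem volume_openSimplex_le (k : ℕ) {s : ℝ} (hs : 0 ≤ s) :
    volume (openSimplex k s) ≤ ENNReal.ofReal (s ^ k / k.factorial) := by
  induction k generalizing s with
  | zero =>
    exact (measure_mono (Set.subset_univ _)).trans (by rw [Measure.volume_pi_eq_dirac]; simp)
  | succ k ih =>
    have hslice : ∀ x, volume {t : Fin k → ℝ | Fin.cons x t ∈ openSimplex (k + 1) s} ≤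
        (Set.Ioo 0 s).indicator (fun x => ENNReal.ofReal ((s - x) ^ k / k.factorial)) x := by
      intro x
      simp only [finCons_mem_openSimplex]
      by_cases hx : x ∈ Set.Ioo 0 s
      · rw [Set.indicator_of_mem hx]
        exact (measure_mono fun t ht => ht.2).trans (ih (by linarith [hx.2]))
      · rw [Set.indicator_of_notMem hx, nonpos_iff_eq_zero]
        refine measure_mono_null (fun t ht => ?_) measure_empty
        rw [Set.mem_Ioo, not_and, not_lt] at hx
        exact (openSimplex_eq_empty (by linarith [hx ht.1])).subset ht.2
    calc volume (openSimplex (k + 1) s)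
        ≤ ∫⁻ x in Set.Ioo 0 s, ENNReal.ofReal ((s - x) ^ k / k.factorial) := by
          rw [volume_eq_lintegral_volume_finCons (measurableSet_openSimplex _ _),
            ← lintegral_indicator measurableSet_Ioo]
          exact lintegral_mono hslice
      _ = ENNReal.ofReal (s ^ (k + 1) / (k + 1).factorial) := by
          rw [← ofReal_integral_eq_lintegral_ofReal, ← integral_Ioc_eq_integral_Ioo,
            ← intervalIntegral.integral_of_le hs, integral_sub_pow_div_factorial]
          · exact (by fun_prop : Continuous fun x : ℝ => (s - x) ^ k / k.factorial)
              |>.integrableOn_Icc.mono_set Set.Ioo_subset_Icc_self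
          · filter_upwards [ae_restrict_mem measurableSet_Ioo] with x hx
            have : 0 ≤ s - x := by linarith [hx.2]
            positivity

end Simplex

section Vk

/-- The paper's `f_{k-1}(u; t_1, …, t_{k-1})`, the integrand of `μ_k`. -/
noncomputable def mukIntegrand (k : ℕ) (u : ℝ) (t : Fin k → ℝ) : ℝ :=
  ∏ j ∈ univ.filter (fun j : Fin k => (j : ℕ) < k - 1),
    (u - ∑ i ∈ univ.filter (fun i : Fin k => i ≤ j), t i)⁻¹

variable {k : ℕ} {u v : ℝ} {t : Fin k → ℝ}

theorem measurableSet_setOf_mem_Vk (k : ℕ) (v : ℝ) :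
    MeasurableSet {p : ℝ × (Fin k → ℝ) | p.2 ∈ Vk k p.1 v} := by
  simp only [Vk, Set.mem_ofPred_eq, Set.mem_Ioo]
  exact measurableSet_setOfPred.2 (by fun_prop)

theorem measurableSet_Vk (k : ℕ) (u v : ℝ) : MeasurableSet (Vk k u v) :=
  measurable_prodMk_left (measurableSet_setOf_mem_Vk k v)

theorem measurable_mukIntegrand_uncurry (k : ℕ) :
    Measurable fun p : ℝ × (Fin k → ℝ) => mukIntegrand k p.1 p.2 := by
  unfold mukIntegrand
  fun_prop

theorem volume_Vk_lt_top : volume (Vk k u v) < ⊤ :=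
  ((Metric.isBounded_Icc (0 : Fin k → ℝ) 1).subset fun _ ht =>
    ⟨fun i => (ht.1 i).1.le, fun i => (ht.1 i).2.le⟩).measure_lt_top

theorem Vk_subset_openSimplex (hv : 0 ≤ v) : Vk k u v ⊆ openSimplex k u :=
  fun _ ht => ⟨fun i => (ht.1 i).1, by linarith [ht.2.2.2]⟩

theorem measureReal_Vk_le (hv : 0 ≤ v) (hu : 0 ≤ u) :
    volume.real (Vk k u v) ≤ u ^ k / k.factorial :=
  ENNReal.toReal_le_of_le_ofReal (by positivity)
    ((measure_mono (Vk_subset_openSimplex hv)).trans (volume_openSimplex_le k hu))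

theorem one_le_sub_sum_of_mem_Vk (ht : t ∈ Vk k u v) {j : Fin k} (hj : (j : ℕ) < k - 1) :
    1 ≤ u - ∑ i ∈ univ.filter (fun i : Fin k => i ≤ j), t i := by
  have hsub : ∑ i ∈ univ.filter (fun i : Fin k => i ≤ j), t i ≤
      ∑ i ∈ univ.filter (fun i : Fin k => (i : ℕ) < k - 1), t i := by
    refine sum_le_sum_of_subset_of_nonneg (fun i hi => ?_) fun i _ _ => (ht.1 i).1.le
    simp only [mem_filter, mem_univ, true_and] at hi ⊢
    exact lt_of_le_of_lt (Fin.le_def.1 hi) hj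
  linarith [ht.2.1]

theorem norm_mukIntegrand_le_one (ht : t ∈ Vk k u v) : ‖mukIntegrand k u t‖ ≤ 1 := by
  rw [mukIntegrand, norm_prod]
  refine prod_le_one (fun _ _ => norm_nonneg _) fun j hj => ?_
  rw [norm_inv]
  have := one_le_sub_sum_of_mem_Vk ht (mem_filter.1 hj).2
  exact inv_le_one_of_one_le₀ (by rwa [Real.norm_of_nonneg (by linarith)])

theorem integrableOn_mukIntegrand : IntegrableOn (mukIntegrand k u) (Vk k u v) :=
  Measure.integrableOn_of_bounded (M := 1) volume_Vk_lt_top.ne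
    ((measurable_mukIntegrand_uncurry k).comp measurable_prodMk_left).aestronglyMeasurable
    ((ae_restrict_iff' (measurableSet_Vk k u v)).2 (ae_of_all _ fun _ => norm_mukIntegrand_le_one))

end Vk

section Muk

variable {k : ℕ} {s v : ℝ}

theorem mukIntegrand_one (u : ℝ) (t : Fin 1 → ℝ) : mukIntegrand 1 u t = 1 := by
  simp [mukIntegrand]

theorem Vk_one (hs : 1 < s) :
    Vk 1 s v =
      MeasurableEquiv.funUnique (Fin 1) ℝ ⁻¹' (Set.Ioo 0 1 ∩ Set.Ioo (s - 1) (s - v)) := by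
  ext t
  simp [Vk, Fin.forall_fin_one, hs]

theorem muk_eq_setIntegral (hk : 1 ≤ k) (hs : 1 < s) :
    muk k s v = s⁻¹ * ∫ t in Vk k s v, mukIntegrand k s t := by
  obtain rfl | hk1 := eq_or_ne k 1
  · rw [muk, if_pos rfl, Vk_one hs]
    simp only [mukIntegrand_one, setIntegral_const, smul_eq_mul, mul_one, measureReal_def]
    exact congrArg (fun m => s⁻¹ * m.toReal)
      ((volume_preserving_funUnique (Fin 1) ℝ).measure_preimage
        (measurableSet_Ioo.inter measurableSet_Ioo).nullMeasurableSet).symm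
  · rw [muk, if_neg hk1]
    rfl

theorem muk_one_eq_zero {u : ℝ} (hu : 2 ≤ u) : muk 1 u v = 0 := by
  have : Set.Ioo (0 : ℝ) 1 ∩ Set.Ioo (u - 1) (u - v) = ∅ :=
    Set.eq_empty_of_forall_notMem fun x hx => by linarith [hx.1.2, hx.2.1]
  rw [muk, if_pos rfl, this, measure_empty, ENNReal.toReal_zero, mul_zero]

theorem norm_muk_le (hk : 1 ≤ k) (hv : 0 ≤ v) (hs : 1 < s) :
    ‖muk k s v‖ ≤ s ^ k / k.factorial := by
  have hint : ‖∫ t in Vk k s v, mukIntegrand k s t‖ ≤ s ^ k / k.factorial :=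
    (norm_setIntegral_le_of_norm_le_const volume_Vk_lt_top
      fun _ => norm_mukIntegrand_le_one).trans
      (by simpa using measureReal_Vk_le hv (by linarith))
  rw [muk_eq_setIntegral hk hs, norm_mul, norm_inv, Real.norm_of_nonneg (by linarith)]
  exact (mul_le_of_le_one_left (norm_nonneg _) (inv_le_one_of_one_le₀ hs.le)).trans hint

theorem aestronglyMeasurable_muk (hk : 1 ≤ k) :
    AEStronglyMeasurable (fun s => muk k s v) (volume.restrict (Set.Ioi 1)) := by
  have hW := measurableSet_setOf_mem_Vk k v
  have hmeas : Measurable fun s => ∫ t in Vk k s v, mukIntegrand k s t := by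
    have := ((measurable_mukIntegrand_uncurry k).indicator hW).stronglyMeasurable
      |>.integral_prod_right' (ν := volume)
    convert this.measurable using 1
    exact funext fun s => (integral_indicator (measurableSet_Vk k s v)).symm
  refine (measurable_inv.mul hmeas).aestronglyMeasurable.congr ?_
  filter_upwards [ae_restrict_mem measurableSet_Ioi] with s hs
  exact (muk_eq_setIntegral hk hs).symm

end Muk

section Recursion

variable {k : ℕ} {u v : ℝ}

theorem sum_filter_lt_finCons (hk : 1 ≤ k) (x : ℝ) (t : Fin k → ℝ) :
    ∑ i ∈ univ.filter (fun i : Fin (k + 1) => (i : ℕ) < k + 1 - 1),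
        (Fin.cons x t : Fin (k + 1) → ℝ) i =
      x + ∑ i ∈ univ.filter (fun i : Fin k => (i : ℕ) < k - 1), t i := by
  simp [sum_filter, Fin.sum_univ_succ, Nat.lt_sub_iff_add_lt, show 0 < k by omega]

theorem sum_filter_le_finCons_succ (x : ℝ) (t : Fin k → ℝ) (j : Fin k) :
    ∑ i ∈ univ.filter (fun i : Fin (k + 1) => i ≤ j.succ),
        (Fin.cons x t : Fin (k + 1) → ℝ) i =
      x + ∑ i ∈ univ.filter (fun i : Fin k => i ≤ j), t i := by
  simp [sum_filter, Fin.sum_univ_succ]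

theorem finCons_mem_Vk_succ (hk : 1 ≤ k) {x : ℝ} {t : Fin k → ℝ} :
    (Fin.cons x t : Fin (k + 1) → ℝ) ∈ Vk (k + 1) u v ↔
      x ∈ Set.Ioo 0 1 ∧ t ∈ Vk k (u - x) v := by
  simp only [Vk, Set.mem_ofPred_eq, Fin.forall_fin_succ, Fin.cons_zero, Fin.cons_succ,
    Fin.sum_cons, sum_filter_lt_finCons hk]
  constructor
  · rintro ⟨⟨hx, ht⟩, h1, h2, h3⟩
    exact ⟨hx, ht, by linarith, by linarith, by linarith⟩
  · rintro ⟨hx, ht, h1, h2, h3⟩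
    exact ⟨⟨hx, ht⟩, by linarith, by linarith, by linarith⟩

theorem mukIntegrand_finCons (hk : 1 ≤ k) (x : ℝ) (t : Fin k → ℝ) :
    mukIntegrand (k + 1) u (Fin.cons x t) = (u - x)⁻¹ * mukIntegrand k (u - x) t := by
  simp [mukIntegrand, prod_filter, Fin.prod_univ_succ, sum_filter_le_finCons_succ,
    Nat.lt_sub_iff_add_lt, show 0 < k by omega, filter_eq', sub_sub, mul_comm]

theorem setIntegral_slice_Vk_succ (hk : 1 ≤ k) (hu : 2 ≤ u) (x : ℝ) :
    ∫ t in {t : Fin k → ℝ | Fin.cons x t ∈ Vk (k + 1) u v},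
        mukIntegrand (k + 1) u (Fin.cons x t) =
      (Set.Ioo 0 1).indicator (fun x => muk k (u - x) v) x := by
  simp only [finCons_mem_Vk_succ hk, mukIntegrand_finCons hk]
  by_cases hx : x ∈ Set.Ioo 0 1
  · rw [Set.indicator_of_mem hx, muk_eq_setIntegral hk (by linarith [hx.2]),
      ← integral_const_mul]
    simp only [hx, true_and, Set.ofPred_mem_eq]
  · simp [hx]

theorem mul_muk_succ (hk : 1 ≤ k) (hu : 2 ≤ u) :
    u * muk (k + 1) u v = ∫ s in (u - 1)..u, muk k s v := by
  rw [muk_eq_setIntegral (by omega) (by linarith), ← mul_assoc, mul_inv_cancel₀ (by linarith),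
    one_mul, setIntegral_eq_integral_setIntegral_finCons (measurableSet_Vk _ _ _)
      integrableOn_mukIntegrand]
  simp only [setIntegral_slice_Vk_succ hk hu]
  rw [integral_indicator measurableSet_Ioo, ← integral_Ioc_eq_integral_Ioo,
    ← intervalIntegral.integral_of_le zero_le_one,
    intervalIntegral.integral_comp_sub_left (fun s => muk k s v), sub_zero]

end Recursion

section Series

variable (κ : ℝ) {v : ℝ}

theorem norm_pow_mul_muk_le (hv : 0 ≤ v) {s u : ℝ} (hs : 1 < s) (hsu : s ≤ u) (n : ℕ) :
    ‖κ ^ (n + 1) * muk (n + 1) s v‖ ≤ |κ| ^ (n + 1) * (u ^ (n + 1) / (n + 1).factorial) := by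
  rw [norm_mul, norm_pow, Real.norm_eq_abs]
  gcongr
  exact (norm_muk_le (by omega) hv hs).trans (by gcongr)

theorem summable_pow_mul_pow_div_factorial (κ u : ℝ) :
    Summable fun n : ℕ => κ ^ (n + 1) * (u ^ (n + 1) / (n + 1).factorial) := by
  simpa only [mul_pow, mul_div_assoc] using
    (summable_nat_add_iff 1).2 (Real.summable_pow_div_factorial (κ * u))

theorem hasSum_mukappa (hv : 0 ≤ v) {s : ℝ} (hs : 1 < s) :
    HasSum (fun n => κ ^ (n + 1) * muk (n + 1) s v) (mukappa κ s v) :=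
  ((summable_pow_mul_pow_div_factorial |κ| s).of_norm_bounded
    (norm_pow_mul_muk_le κ hv hs le_rfl)).hasSum

theorem hasSum_intervalIntegral_mukappa (hv : 0 ≤ v) {u : ℝ} (hu : 2 ≤ u) :
    HasSum (fun n => ∫ s in (u - 1)..u, κ ^ (n + 1) * muk (n + 1) s v)
      (∫ s in (u - 1)..u, mukappa κ s v) := by
  have hIoc : Set.uIoc (u - 1) u = Set.Ioc (u - 1) u := Set.uIoc_of_le (by linarith)
  have hsub : Set.uIoc (u - 1) u ⊆ Set.Ioi 1 := fun s hs => by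
    rw [hIoc] at hs; exact Set.mem_Ioi.2 (by linarith [hs.1])
  refine intervalIntegral.hasSum_integral_of_dominated_convergence
    (fun n _ => |κ| ^ (n + 1) * (u ^ (n + 1) / (n + 1).factorial)) (fun n => ?_)
    (fun n => ae_of_all _ fun s hs => ?_)
    (ae_of_all _ fun _ _ => summable_pow_mul_pow_div_factorial |κ| u) intervalIntegrable_const
    (ae_of_all _ fun s hs => hasSum_mukappa κ hv (hsub hs))
  · exact ((aestronglyMeasurable_muk (by omega)).const_mul _).mono_measure
      (Measure.restrict_mono hsub le_rfl)
  · exact norm_pow_mul_muk_le κ hv (hsub hs) (hIoc ▸ hs).2 n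

end Series

theorem mukappa_integral_equation_general (κ : ℝ) (v : ℝ) (hv0 : 0 ≤ v) :
    ∀ u : ℝ, 2 < u → u * mukappa κ u v = κ * ∫ s in (u-1)..u, mukappa κ s v := by
  intro u hu
  have hlhs : HasSum (fun n => u * (κ ^ (n + 2) * muk (n + 2) u v)) (u * mukappa κ u v) := by
    have h := (hasSum_mukappa κ hv0 (by linarith : (1 : ℝ) < u)).mul_left u
    rw [← hasSum_nat_add_iff' 1] at h
    simpa [muk_one_eq_zero hu.le] using h
  have hrhs := (hasSum_intervalIntegral_mukappa κ hv0 hu.le).mul_left κ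
  refine hlhs.unique (hrhs.congr_fun fun n => ?_)
  rw [intervalIntegral.integral_const_mul, ← mul_muk_succ (by omega) hu.le]
  ring

/-- Integral equation for `μ^{(κ)}` for `u > 2` (Proposition 3.4, (3.8)). -/
theorem mukappa_integral_equation (κ : ℝ) (hκ : 0 < κ) (v : ℝ) (hv0 : 0 ≤ v) (hv : v < 1) :
    ∀ u : ℝ, 2 < u → u * mukappa κ u v = κ * ∫ s in (u-1)..u, mukappa κ s v :=
  mukappa_integral_equation_general κ v hv0
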